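/- arXiv:1909.03432 — 6 statements merged into one kernel-verified Lean document; each statement's English description precedes it below -/
import Mathlib

section
/- Let n ≥ 1 and f : (Fin n → Bool) → Bool be fully sensitive (flipping any single coordinate flips the output) and valid (for every x there exists i with f x = x i). Then f x equals the XOR of all coordinates of x, for every x. -/
instance : Std.Commutative xor := ⟨Bool.xor_comm⟩
instance : Std.Associative xor := ⟨Bool.xor_assoc⟩

/-!
Flipping one coordinate flips both `f` and the parity, so `f x ⊕ parity x` is invariant under
changing any single coordinate and hence constant. Validity at the all-`false` input forces that
constant to be `false`.
-/

open Function

variable {ι : Type*} [DecidableEq ι]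

def FullySensitive (f : (ι → Bool) → Bool) : Prop :=
  ∀ x i, f (update x i true) ≠ f (update x i false)

theorem eq_of_forall_update_eq {β γ : Type*} [Finite ι] {h : (ι → β) → γ}
    (hh : ∀ x i b, h (update x i b) = h x) (x y : ι → β) : h x = h y := by
  have : Fintype ι := Fintype.ofFinite ι
  suffices ∀ s : Finset ι, ∀ x y : ι → β, (∀ j ∉ s, x j = y j) → h x = h y from
    this Finset.univ x y fun j hj => absurd (Finset.mem_univ j) hj
  intro s
  induction s using Finset.induction_on with
  | empty => exact fun x y hxy => congrArg h (funext fun j => hxy j (Finset.notMem_empty j))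
  | insert a s _ ih =>
    intro x y hxy
    rw [← hh x a (y a)]
    refine ih _ y fun j hj => ?_
    rcases eq_or_ne j a with rfl | hja
    · exact update_self j (y j) x
    · rw [update_of_ne hja]
      exact hxy j (by simp [hja, hj])

theorem Finset.fold_xor_update {s : Finset ι} {i : ι} (hi : i ∈ s) (x : ι → Bool) (b : Bool) :
    s.fold xor false (update x i b) = xor b ((s.erase i).fold xor false x) := by
  rw [← Finset.insert_erase hi, Finset.fold_insert (Finset.notMem_erase i s), update_self,
    Finset.insert_erase hi]
  congr 1
  exact Finset.fold_congr fun j hj => update_of_ne (Finset.ne_of_mem_erase hj) b x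

theorem fullySensitive_fold_xor [Fintype ι] :
    FullySensitive fun x : ι → Bool => Finset.univ.fold xor false x := by
  intro x i
  simp only [Finset.fold_xor_update (Finset.mem_univ i)]
  cases (Finset.univ.erase i).fold xor false x <;> decide

theorem FullySensitive.update_eq {f : (ι → Bool) → Bool} (hf : FullySensitive f) (x : ι → Bool)
    (i : ι) (b : Bool) : f (update x i b) = xor (f (update x i false)) b := by
  cases b
  · exact (Bool.xor_false _).symm
  · exact (Bool.eq_not_iff.mpr (hf x i)).trans (Bool.xor_true _).symm

theorem FullySensitive.xor_update_eq {f g : (ι → Bool) → Bool} (hf : FullySensitive f)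
    (hg : FullySensitive g) (x : ι → Bool) (i : ι) (b : Bool) :
    xor (f (update x i b)) (g (update x i b)) = xor (f x) (g x) := by
  conv_rhs => rw [← update_eq_self i x]
  rw [hf.update_eq, hg.update_eq, hf.update_eq x i (x i), hg.update_eq x i (x i)]
  have cancel : ∀ a b c : Bool, xor (xor a b) (xor c b) = xor a c := by decide
  rw [cancel, cancel]

theorem FullySensitive.xor_eq_xor [Finite ι] {f g : (ι → Bool) → Bool} (hf : FullySensitive f)
    (hg : FullySensitive g) (x y : ι → Bool) : xor (f x) (g x) = xor (f y) (g y) :=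
  eq_of_forall_update_eq (h := fun x => xor (f x) (g x)) (hf.xor_update_eq hg) x y

theorem fully_sensitive_valid_eq_xor_general (n : ℕ)
    (f : (Fin n → Bool) → Bool)
    (hsens : ∀ (x : Fin n → Bool) (i : Fin n),
      f (Function.update x i true) ≠ f (Function.update x i false))
    (hvalid : ∀ x : Fin n → Bool, ∃ i : Fin n, f x = x i) :
    ∀ x : Fin n → Bool, f x = Finset.univ.fold xor false x := by
  intro x
  obtain ⟨i, hf₀⟩ := hvalid fun _ => false
  have hparity₀ : Finset.univ.fold xor false (fun _ : Fin n => false) = false := by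
    rw [Finset.fold_const (c := false) rfl]
    split_ifs <;> rfl
  have h := (show FullySensitive f from hsens).xor_eq_xor fullySensitive_fold_xor x fun _ => false
  rw [hf₀, hparity₀] at h
  simpa using h

theorem fully_sensitive_valid_eq_xor (n : ℕ) (hn : 1 ≤ n)
    (f : (Fin n → Bool) → Bool)
    (hsens : ∀ (x : Fin n → Bool) (i : Fin n),
      f (Function.update x i true) ≠ f (Function.update x i false))
    (hvalid : ∀ x : Fin n → Bool, ∃ i : Fin n, f x = x i) :
    ∀ x : Fin n → Bool, f x = Finset.univ.fold xor false x :=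
  fully_sensitive_valid_eq_xor_general n f hsens hvalid
end

section
/- Let n ≥ 1, r ≥ 1, and f : (Fin n → Fin r) → Fin r. Suppose f is 'coordinatewise bijective': for every coordinate i and every x, the map b ↦ f (Function.update x i b) is a bijection of Fin r. Suppose also f is valid: for every x there exists i with f x = x i. Then for every value v : Fin r and every index j, f applied to the vector that is v at coordinate j and 0 everywhere else equals v. -/
/-!
Validity forces `f 0 = 0`, and on `Pi.single j v` it leaves only the outputs `v` and `0`.
If the output were `0` while `v ≠ 0`, then `b ↦ f (Pi.single j b)` would take the value `0`
at both `0` and `v`, contradicting injectivity in coordinate `j`.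
-/

section Validity

variable {ι α : Type*} {f : (ι → α) → α}

theorem apply_zero_of_valid [Zero α] (hvalid : ∀ x, ∃ i, f x = x i) : f 0 = 0 := by
  obtain ⟨_, hi⟩ := hvalid 0
  exact hi

theorem apply_single_of_valid [DecidableEq ι] [Zero α] {j : ι}
    (hinj : Function.Injective fun b => f (Pi.single j b))
    (hvalid : ∀ x, ∃ i, f x = x i) (v : α) :
    f (Pi.single j v) = v := by
  obtain ⟨i, hi⟩ := hvalid (Pi.single j v)
  rcases eq_or_ne i j with rfl | hij
  · simpa using hi
  · have hzero : f (Pi.single j v) = f (Pi.single j 0) := by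
      rw [hi, Pi.single_eq_of_ne hij, Pi.single_zero, apply_zero_of_valid hvalid]
    rw [hzero, hinj hzero, Pi.single_zero, apply_zero_of_valid hvalid]

end Validity

theorem single_value_decides_general (n r : ℕ) [NeZero r]
    (f : (Fin n → Fin r) → Fin r)
    (hbij : ∀ (i : Fin n) (x : Fin n → Fin r),
      Function.Bijective (fun b : Fin r => f (Function.update x i b)))
    (hvalid : ∀ x : Fin n → Fin r, ∃ i : Fin n, f x = x i) :
    ∀ (v : Fin r) (j : Fin n), f (fun k => if k = j then v else 0) = v := by
  intro v j
  have hsingle : (fun k => if k = j then v else 0) = Pi.single j v := by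
    funext k
    exact (Pi.single_apply j v k).symm
  rw [hsingle]
  exact apply_single_of_valid (hbij j 0).injective hvalid v

theorem single_value_decides (n r : ℕ) (hn : 1 ≤ n) (hr : 1 ≤ r) [NeZero r]
    (f : (Fin n → Fin r) → Fin r)
    (hbij : ∀ (i : Fin n) (x : Fin n → Fin r),
      Function.Bijective (fun b : Fin r => f (Function.update x i b)))
    (hvalid : ∀ x : Fin n → Fin r, ∃ i : Fin n, f x = x i) :
    ∀ (v : Fin r) (j : Fin n), f (fun k => if k = j then v else 0) = v :=
  single_value_decides_general n r f hbij hvalid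
end

section
/- Let n ≥ 2 and r ≥ 3. There is no function f : (Fin n → Fin r) → Fin r that is both coordinatewise bijective (for every coordinate i and every x, b ↦ f (Function.update x i b) is a bijection of Fin r) and valid (for every x there exists i with f x = x i). -/
/-!
Fix a value `a` and let `c` be the constant configuration `a`. Validity forces `f c = a`, and
then injectivity in coordinate `i` forces a configuration that differs from `c` only at `i`, with
value `v`, to decide `v`; a configuration with the same value `v ≠ a` at two agents must then
decide `a`. Now take `u, v, a` distinct and let `x` carry `u` at agent `i`, `v` at agent `j` and
`a` elsewhere. Changing `x i` to `a` or to `v`, or changing `x j` to `a`, produces the decisions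
`v`, `a`, `u` respectively, so injectivity in those coordinates rules out each of `a, u, v` as
`f x`, while validity requires `f x` to be one of them.
-/

open Function

section

variable {ι α : Type*}

def IsValid (f : (ι → α) → α) : Prop :=
  ∀ x, ∃ i, f x = x i

theorem IsValid.apply_const {f : (ι → α) → α} (hv : IsValid f) (a : α) :
    f (const ι a) = a := by
  obtain ⟨_, hi⟩ := hv (const ι a)
  exact hi

variable [DecidableEq ι]

def CoordinatewiseInjective (f : (ι → α) → α) : Prop :=
  ∀ i x, Injective fun b => f (update x i b)

namespace CoordinatewiseInjective

variable {f : (ι → α) → α}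

theorem eq_apply_of_apply_update_eq (hf : CoordinatewiseInjective f)
    {x : ι → α} {i : ι} {b : α} (h : f (update x i b) = f x) : b = x i :=
  hf i x (by simpa only [update_eq_self] using h)

theorem apply_update_const (hf : CoordinatewiseInjective f) (hv : IsValid f) (a : α)
    (i : ι) (v : α) : f (update (const ι a) i v) = v := by
  obtain ⟨k, hk⟩ := hv (update (const ι a) i v)
  by_cases hki : k = i
  · rwa [hki, update_self] at hk
  · rw [update_of_ne hki, const_apply] at hk
    have hback : f (update (update (const ι a) i v) i a) = f (update (const ι a) i v) := by
      rw [update_idem, update_eq_self_iff.mpr (const_apply ..).symm, hv.apply_const, hk]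
    have hav : a = v := by simpa using hf.eq_apply_of_apply_update_eq hback
    rw [hk, hav]

theorem apply_update_update_const_self (hf : CoordinatewiseInjective f)
    (hv : IsValid f) {a v : α} (hva : v ≠ a) {i j : ι} (hij : i ≠ j) :
    f (update (update (const ι a) i v) j v) = a := by
  set y := update (update (const ι a) i v) j v
  have hy_j : update y j a = update (const ι a) i v := by
    rw [update_idem, update_eq_self_iff, update_of_ne hij.symm, const_apply]
  obtain ⟨k, hk⟩ := hv y
  have hy_k : y k = a ∨ y k = v := by
    simp only [y, update_apply, const_apply]
    split_ifs <;> simp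
  rcases hy_k with h | h
  · rwa [h] at hk
  · refine absurd ?_ hva.symm
    have hja := hf.eq_apply_of_apply_update_eq (x := y) (i := j) (b := a)
      (by rw [hy_j, hf.apply_update_const hv, hk, h])
    simpa [y] using hja

theorem not_isValid (hf : CoordinatewiseInjective f) {i j : ι} (hij : i ≠ j) {a u v : α}
    (hua : u ≠ a) (hva : v ≠ a) (huv : u ≠ v) : ¬ IsValid f := by
  intro hv
  set x := update (update (const ι a) i u) j v with hx
  have hx_i : x i = u := by simp [x, hij]
  have hx_j : x j = v := by simp [x]
  have h_ia : f (update x i a) = v := by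
    rw [hx, update_comm hij, update_idem, update_eq_self_iff.mpr (by simp [hij])]
    exact hf.apply_update_const hv a j v
  have h_iv : f (update x i v) = a := by
    rw [hx, update_comm hij, update_idem]
    exact hf.apply_update_update_const_self hv hva hij.symm
  have h_ja : f (update x j a) = u := by
    rw [hx, update_idem, update_eq_self_iff.mpr (by simp [hij.symm])]
    exact hf.apply_update_const hv a i u
  obtain ⟨k, hk⟩ := hv x
  have hx_k : x k = a ∨ x k = u ∨ x k = v := by
    simp only [x, update_apply, const_apply]
    split_ifs <;> simp
  rcases hx_k with h | h | h <;> rw [h] at hk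
  · exact huv (hx_i ▸ hf.eq_apply_of_apply_update_eq (h_iv.trans hk.symm)).symm
  · exact hva (hx_j ▸ hf.eq_apply_of_apply_update_eq (h_ja.trans hk.symm)).symm
  · exact hua (hx_i ▸ hf.eq_apply_of_apply_update_eq (h_ia.trans hk.symm)).symm

end CoordinatewiseInjective

end

theorem no_multivalued_consensus_general (n r : ℕ) (hn : 2 ≤ n) (hr : 3 ≤ r) :
    ¬ ∃ f : (Fin n → Fin r) → Fin r,
      (∀ (i : Fin n) (x : Fin n → Fin r),
        Function.Bijective (fun b : Fin r => f (Function.update x i b))) ∧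
      (∀ x : Fin n → Fin r, ∃ i : Fin n, f x = x i) := by
  rintro ⟨f, hbij, hval⟩
  have : Nontrivial (Fin n) := Fin.nontrivial_iff_two_le.mpr hn
  obtain ⟨i, j, hij⟩ := exists_pair_ne (Fin n)
  obtain ⟨a, u, v, hau, hav, huv⟩ :=
    Fintype.two_lt_card_iff.mp (by rw [Fintype.card_fin]; omega : 2 < Fintype.card (Fin r))
  exact CoordinatewiseInjective.not_isValid (fun i x => (hbij i x).injective) hij hau.symm
    hav.symm huv hval

theorem no_multivalued_consensus (n r : ℕ) (hn : 2 ≤ n) (hr : 3 ≤ r) [NeZero r] :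
    ¬ ∃ f : (Fin n → Fin r) → Fin r,
      (∀ (i : Fin n) (x : Fin n → Fin r),
        Function.Bijective (fun b : Fin r => f (Function.update x i b))) ∧
      (∀ x : Fin n → Fin r, ∃ i : Fin n, f x = x i) :=
  no_multivalued_consensus_general n r hn hr
end

section
/- Let n ≥ 1, r ≥ 2, p a probability mass function on Fin r with full support, and f : (Fin n → Fin r) → Fin r a valid function. Suppose for every coordinate i and value v, the probability under b ∼ p that f (Function.update x i b) = v is a constant c(i,v) independent of x. Then c(i,v) = p v for every i and v. -/
/-!
Feeding the constant input `fun _ => w` shows, by validity, that resampling coordinate `i` outputs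
`w` whenever the fresh sample is `w`, so `p w ≤ c i w`. As `c i` is itself a probability
distribution (a pushforward of `p`), a pointwise domination of one distribution by another is
an equality.
-/

namespace PMF

variable {α β : Type*}

theorem eq_of_forall_le {p q : PMF α} (h : ∀ a, p a ≤ q a) : p = q := by
  ext a
  refine (h a).antisymm (not_lt.mp fun hlt => ?_)
  have := ENNReal.tsum_lt_tsum (p.tsum_coe ▸ ENNReal.one_ne_top) h hlt
  simp [PMF.tsum_coe] at this

theorem apply_le_map_apply (p : PMF α) (g : α → β) (a : α) : p a ≤ p.map g (g a) := by
  rw [map_apply]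
  refine le_trans ?_ (ENNReal.le_tsum a)
  simp

theorem sum_mul_ite_eq_map_apply [Fintype α] [DecidableEq β] (p : PMF α) (g : α → β) (b : β) :
    ∑ a, p a * (if g a = b then 1 else 0) = p.map g b := by
  rw [map_apply, tsum_fintype]
  refine Finset.sum_congr rfl fun a _ => ?_
  by_cases h : g a = b
  · simp [h]
  · simp [h, Ne.symm h]

end PMF

theorem out_in_general (n r : ℕ)
    (p : PMF (Fin r))
    (f : (Fin n → Fin r) → Fin r)
    (hvalid : ∀ x : Fin n → Fin r, ∃ i : Fin n, f x = x i)
    (c : Fin n → Fin r → ENNReal)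
    (hconst : ∀ (i : Fin n) (v : Fin r) (x : Fin n → Fin r),
      (∑ b : Fin r, p b * (if f (Function.update x i b) = v then 1 else 0)) = c i v) :
    ∀ (i : Fin n) (v : Fin r), c i v = p v := by
  intro i v
  have hc : ∀ x w, c i w = p.map (fun b => f (Function.update x i b)) w := fun x w => by
    rw [← hconst i w x, PMF.sum_mul_ite_eq_map_apply]
  have hge : ∀ w, p w ≤ c i w := fun w => by
    obtain ⟨j, hfix⟩ := hvalid fun _ => w
    simpa [hc (fun _ => w) w, hfix] using
      p.apply_le_map_apply (fun b => f (Function.update (fun _ => w) i b)) w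
  have hmap := PMF.eq_of_forall_le fun w => (hge w).trans_eq (hc (fun _ => v) w)
  rw [hc (fun _ => v), ← hmap]

theorem out_in (n r : ℕ) (hn : 1 ≤ n) (hr : 2 ≤ r) [NeZero r]
    (p : PMF (Fin r)) (hsupp : ∀ v : Fin r, p v ≠ 0)
    (f : (Fin n → Fin r) → Fin r)
    (hvalid : ∀ x : Fin n → Fin r, ∃ i : Fin n, f x = x i)
    (c : Fin n → Fin r → ENNReal)
    (hconst : ∀ (i : Fin n) (v : Fin r) (x : Fin n → Fin r),
      (∑ b : Fin r, p b * (if f (Function.update x i b) = v then 1 else 0)) = c i v) :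
    ∀ (i : Fin n) (v : Fin r), c i v = p v :=
  out_in_general n r p f hvalid c hconst
end

section
/- Let n ≥ 2, r ≥ 2, p a probability mass function on Fin r with full support, and f : (Fin n → Fin r) → Fin r a valid function such that for every coordinate i and value v, the probability under b ∼ p that f (Function.update x i b) = v is independent of x. Then p is the uniform distribution on Fin r, i.e., p v = 1/r for all v. -/
/-!
Write `c(i, v)` for the probability that `f` outputs `v` when coordinate `i` is resampled from
`p`; by hypothesis it does not depend on the other coordinates. If all coordinates but `i` hold
`w ≠ v`, validity lets `f` output `v` only when the resampled value is `v`, so `c(i, v) ≤ p v`.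
Comparing with the unanimous profile `v` shows that a lone deviator always wins:
`f (update (const v) i b) = b`, which forces `c(i, v) = p v`. Now take the profile with `v₁`
everywhere except `v₂` at some `j ≠ i`: it outputs `v₂` already when the resample at `i` is `v₁`,
so `p v₁ ≤ c(i, v₂) = p v₂`. By symmetry all the `p v` coincide.
-/

open Finset Function

theorem PMF.apply_eq_inv_card_of_forall_eq {α : Type*} [Fintype α] (p : PMF α)
    (h : ∀ a b, p a = p b) (a : α) : p a = (Fintype.card α : ENNReal)⁻¹ := by
  have hsum : ∑ b, p b = 1 := by rw [← tsum_fintype (L := .unconditional _)]; exact p.tsum_coe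
  refine ENNReal.eq_inv_of_mul_eq_one_left ?_
  rw [← hsum, Finset.sum_congr rfl fun b _ => h b a, sum_const, card_univ, nsmul_eq_mul,
    mul_comm]

namespace Consensus

variable {ι α : Type*}

def IsValid (f : (ι → α) → α) : Prop := ∀ x, ∃ i, f x = x i

variable {f : (ι → α) → α}

theorem IsValid.apply_const (hf : IsValid f) (v : α) : f (fun _ => v) = v :=
  (hf _).choose_spec

variable [DecidableEq ι]

theorem IsValid.apply_update_eq_or (hf : IsValid f) (x : ι → α) (i : ι) (b : α) :
    f (update x i b) = b ∨ ∃ j ≠ i, f (update x i b) = x j := by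
  obtain ⟨j, hj⟩ := hf (update x i b)
  by_cases hji : j = i
  · subst hji
    exact .inl (hj.trans (update_self ..))
  · exact .inr ⟨j, hji, hj.trans (update_of_ne hji ..)⟩

theorem IsValid.apply_update_const_eq_or (hf : IsValid f) (w : α) (i : ι) (b : α) :
    f (update (fun _ => w) i b) = b ∨ f (update (fun _ => w) i b) = w := by
  rcases hf.apply_update_eq_or _ i b with h | ⟨_, _, h⟩
  exacts [.inl h, .inr h]

variable [Fintype α] [DecidableEq α]

noncomputable def outputProb (p : PMF α) (f : (ι → α) → α) (x : ι → α) (i : ι) (v : α) :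
    ENNReal :=
  ∑ b, p b * (if f (update x i b) = v then 1 else 0)

def HasConstantOutputProb (p : PMF α) (f : (ι → α) → α) : Prop :=
  ∀ i v x y, outputProb p f x i v = outputProb p f y i v

variable {p : PMF α}

theorem outputProb_eq_sum_filter (x : ι → α) (i : ι) (v : α) :
    outputProb p f x i v = ∑ b ∈ univ.filter (fun b => f (update x i b) = v), p b := by
  simp only [outputProb, mul_ite, mul_one, mul_zero, sum_filter]

theorem sum_le_outputProb {x : ι → α} {i : ι} {v : α} {s : Finset α}
    (hs : ∀ b ∈ s, f (update x i b) = v) : ∑ b ∈ s, p b ≤ outputProb p f x i v := by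
  rw [outputProb_eq_sum_filter]
  exact sum_le_sum_of_subset fun b hb => mem_filter.2 ⟨mem_univ b, hs b hb⟩

theorem outputProb_le_of_forall_imp {x : ι → α} {i : ι} {v : α}
    (h : ∀ b, f (update x i b) = v → b = v) : outputProb p f x i v ≤ p v := by
  rw [outputProb_eq_sum_filter, ← sum_singleton p v]
  exact sum_le_sum_of_subset fun b hb => mem_singleton.2 (h b (mem_filter.1 hb).2)

theorem outputProb_eq_of_forall_iff {x : ι → α} {i : ι} {v : α}
    (h : ∀ b, f (update x i b) = v ↔ b = v) : outputProb p f x i v = p v := by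
  rw [outputProb_eq_sum_filter, ← sum_singleton p v]
  congr 1
  ext b
  simp [h]

namespace IsValid

theorem outputProb_const_le (hf : IsValid f) {w v : α} (hwv : w ≠ v) (i : ι) :
    outputProb p f (fun _ => w) i v ≤ p v :=
  outputProb_le_of_forall_imp fun b hb => by
    rcases hf.apply_update_const_eq_or w i b with h | h
    · exact h.symm.trans hb
    · exact absurd (h.symm.trans hb) hwv

variable (hf : IsValid f) (hsupp : ∀ v, p v ≠ 0) (hres : HasConstantOutputProb p f)
include hf hsupp hres

theorem apply_update_const_of_ne (i : ι) {v b : α} (hbv : b ≠ v) :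
    f (update (fun _ => v) i b) = b := by
  by_contra hb
  have hv : f (update (fun _ => v) i b) = v := (hf.apply_update_const_eq_or v i b).resolve_left hb
  have hlower : p v + p b ≤ outputProb p f (fun _ => v) i v := by
    rw [← sum_pair hbv.symm]
    refine sum_le_outputProb fun c hc => ?_
    rcases mem_insert.1 hc with rfl | hc
    · rw [update_eq_self_iff.2 rfl, hf.apply_const]
    · rwa [mem_singleton.1 hc]
  have hupper : p v + p b ≤ p v + 0 := by
    rw [add_zero]
    exact hlower.trans ((hres i v _ _).trans_le (hf.outputProb_const_le hbv i))
  exact hsupp b (le_zero_iff.1 ((ENNReal.add_le_add_iff_left (p.apply_ne_top v)).1 hupper))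

theorem outputProb_const_self (i : ι) (v : α) : outputProb p f (fun _ => v) i v = p v := by
  refine outputProb_eq_of_forall_iff fun b => ?_
  by_cases hbv : b = v
  · subst hbv
    simp only [update_eq_self_iff.2 rfl, hf.apply_const]
  · simp only [hf.apply_update_const_of_ne hsupp hres i hbv, hbv]

theorem apply_le_apply [Nontrivial ι] {v₁ v₂ : α} (hne : v₁ ≠ v₂) : p v₁ ≤ p v₂ := by
  obtain ⟨i, j, hij⟩ := exists_pair_ne ι
  set x : ι → α := update (fun _ => v₁) j v₂
  have hxi : update x i v₁ = x := update_eq_self_iff.2 (update_of_ne hij v₂ fun _ => v₁).symm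
  have hx : f x = v₂ := hf.apply_update_const_of_ne hsupp hres j hne.symm
  calc p v₁ = ∑ b ∈ {v₁}, p b := (sum_singleton p v₁).symm
    _ ≤ outputProb p f x i v₂ :=
      sum_le_outputProb fun b hb => by rw [mem_singleton.1 hb, hxi, hx]
    _ = outputProb p f (fun _ => v₂) i v₂ := hres i v₂ _ _
    _ = p v₂ := hf.outputProb_const_self hsupp hres i v₂

theorem apply_eq_apply [Nontrivial ι] (v w : α) : p v = p w := by
  rcases eq_or_ne v w with rfl | hvw
  · rfl
  · exact (hf.apply_le_apply hsupp hres hvw).antisymm (hf.apply_le_apply hsupp hres hvw.symm)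

end IsValid

end Consensus

theorem input_distribution_uniform_general (n r : ℕ) (hn : 2 ≤ n)
    (p : PMF (Fin r)) (hsupp : ∀ v : Fin r, p v ≠ 0)
    (f : (Fin n → Fin r) → Fin r)
    (hvalid : ∀ x : Fin n → Fin r, ∃ i : Fin n, f x = x i)
    (hres : ∀ (i : Fin n) (v : Fin r) (x y : Fin n → Fin r),
      (∑ b : Fin r, p b * (if f (Function.update x i b) = v then 1 else 0)) =
      (∑ b : Fin r, p b * (if f (Function.update y i b) = v then 1 else 0))) :
    ∀ v : Fin r, p v = 1 / (r : ENNReal) := by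
  have : Nontrivial (Fin n) := Fin.nontrivial_iff_two_le.2 hn
  intro v
  have hconst : ∀ v w, p v = p w := Consensus.IsValid.apply_eq_apply hvalid hsupp hres
  rw [one_div, p.apply_eq_inv_card_of_forall_eq hconst, Fintype.card_fin]

theorem input_distribution_uniform (n r : ℕ) (hn : 2 ≤ n) (hr : 2 ≤ r) [NeZero r]
    (p : PMF (Fin r)) (hsupp : ∀ v : Fin r, p v ≠ 0)
    (f : (Fin n → Fin r) → Fin r)
    (hvalid : ∀ x : Fin n → Fin r, ∃ i : Fin n, f x = x i)
    (hres : ∀ (i : Fin n) (v : Fin r) (x y : Fin n → Fin r),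
      (∑ b : Fin r, p b * (if f (Function.update x i b) = v then 1 else 0)) =
      (∑ b : Fin r, p b * (if f (Function.update y i b) = v then 1 else 0))) :
    ∀ v : Fin r, p v = 1 / (r : ENNReal) :=
  input_distribution_uniform_general n r hn p hsupp f hvalid hres
end

section
/- Let r ≥ 3, n = 2, and f : (Fin 2 → Fin r) → Fin r (viewed as f : Fin r → Fin r → Fin r). Suppose f is valid (f a b ∈ {a, b} for all a b) and f is bijective in each argument separately. Then a contradiction follows; i.e., no such f exists. -/
/-- `f u a` is either `a = f a a` or `u = f u u`; cancelling on the left or on the right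
gives `u = a`. -/
theorem subsingleton_of_conservative_of_injective {α : Type*} (f : α → α → α)
    (hvalid : ∀ a b, f a b = a ∨ f a b = b)
    (hinj₁ : ∀ a, Function.Injective (f a))
    (hinj₂ : ∀ b, Function.Injective (fun a => f a b)) :
    Subsingleton α := by
  refine ⟨fun u a => ?_⟩
  have hidem : ∀ x, f x x = x := fun x => (hvalid x x).elim id id
  rcases hvalid u a with h | h
  · exact (hinj₁ u (h.trans (hidem u).symm)).symm
  · exact hinj₂ a (h.trans (hidem a).symm)

theorem no_two_agent_multivalued_general (r : ℕ) (hr : 3 ≤ r)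
    (f : Fin r → Fin r → Fin r)
    (hvalid : ∀ a b : Fin r, f a b = a ∨ f a b = b)
    (hbij₁ : ∀ a : Fin r, Function.Bijective (f a))
    (hbij₂ : ∀ b : Fin r, Function.Bijective (fun a => f a b)) :
    False := by
  have hsub : Subsingleton (Fin r) := subsingleton_of_conservative_of_injective f hvalid
    (fun a => (hbij₁ a).injective) (fun b => (hbij₂ b).injective)
  have hle : r ≤ 1 := Fin.subsingleton_iff_le_one.mp hsub
  omega

theorem no_two_agent_multivalued (r : ℕ) (hr : 3 ≤ r) [NeZero r]
    (f : Fin r → Fin r → Fin r)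
    (hvalid : ∀ a b : Fin r, f a b = a ∨ f a b = b)
    (hbij₁ : ∀ a : Fin r, Function.Bijective (f a))
    (hbij₂ : ∀ b : Fin r, Function.Bijective (fun a => f a b)) :
    False :=
  no_two_agent_multivalued_general r hr f hvalid hbij₁ hbij₂
end
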